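/- arXiv:2206.15123 — 2 statements merged into one kernel-verified Lean document; each statement's English description precedes it below -/
import Mathlib

section
/- Let E assign to each point p ∈ ℝⁿ a linear subspace E(p) ⊆ ℝⁿ. Let 𝒮₀ be the set of smooth vector fields X on ℝⁿ with X(p) ∈ E(p) for all p, and define inductively 𝒮_{k+1} = 𝒮ₖ ∪ {[X, Y] : X ∈ 𝒮₀, Y ∈ 𝒮ₖ}. Suppose there is a point p₀ ∈ ℝⁿ such that the span of {X(p₀) : X ∈ 𝒮₀} is a proper subspace of ℝⁿ while the span of {X(p₀) : X ∈ ⋃ₖ 𝒮ₖ} is all of ℝⁿ. Then there is no affine connection D on vector fields of ℝⁿ that is both torsion-free (D_X Y − D_Y X = [X,Y] for all smooth X, Y) and compatible with E in the sense that (D_X Y)(p) ∈ E(p) for all p whenever X is a smooth vector field and Y ∈ 𝒮₀. -/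
namespace Stmt4

/-- The space `ℝⁿ`. -/
abbrev V (n : ℕ) := EuclideanSpace ℝ (Fin n)

/-- The Lie bracket of vector fields on `ℝⁿ`:
`[X,Y](p) = DY(p)(X(p)) − DX(p)(Y(p))`. -/
noncomputable def bracket {n : ℕ} (X Y : V n → V n) : V n → V n :=
  fun p => fderiv ℝ Y p (X p) - fderiv ℝ X p (Y p)

/-- The sets `𝒮ₖ` of iterated brackets of smooth sections of `E`. -/
def S {n : ℕ} (E : V n → Submodule ℝ (V n)) : ℕ → Set (V n → V n)
  | 0 => {X | ContDiff ℝ (⊤ : ℕ∞) X ∧ ∀ p, X p ∈ E p}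
  | k + 1 => S E k ∪ {Z | ∃ X ∈ S E 0, ∃ Y ∈ S E k, Z = bracket X Y}

/-- An affine connection on vector fields of `ℝⁿ`. -/
structure IsAffineConnection {n : ℕ}
    (D : (V n → V n) → (V n → V n) → (V n → V n)) : Prop where
  add_left : ∀ X X' Y, D (X + X') Y = D X Y + D X' Y
  smul_left : ∀ (c : ℝ) X Y, D (c • X) Y = c • D X Y
  add_right : ∀ X Y Y', D X (Y + Y') = D X Y + D X Y'
  smul_right : ∀ (c : ℝ) X Y, D X (c • Y) = c • D X Y
  fun_smul_left : ∀ (f : V n → ℝ) (X Y : V n → V n), ContDiff ℝ (⊤ : ℕ∞) f →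
    ContDiff ℝ (⊤ : ℕ∞) X → ContDiff ℝ (⊤ : ℕ∞) Y →
    D (fun p => f p • X p) Y = fun p => f p • D X Y p
  leibniz : ∀ (f : V n → ℝ) (X Y : V n → V n), ContDiff ℝ (⊤ : ℕ∞) f →
    ContDiff ℝ (⊤ : ℕ∞) X → ContDiff ℝ (⊤ : ℕ∞) Y →
    D X (fun p => f p • Y p) =
      fun p => (fderiv ℝ f p (X p)) • Y p + f p • D X Y p

/-- If, at some point `p₀`, the sections of `E` span a proper subspace
of `ℝⁿ` while iterated brackets of sections of `E` span all of `ℝⁿ`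
(i.e. `E` is bracket-generating but proper at `p₀`), then no affine connection is both
torsion-free and compatible with `E`. -/
theorem no_torsionfree_compatible_connection (n : ℕ)
    (E : V n → Submodule ℝ (V n)) (p₀ : V n)
    (hproper : Submodule.span ℝ {v | ∃ X ∈ S E 0, X p₀ = v} ≠ (⊤ : Submodule ℝ (V n)))
    (hbg : Submodule.span ℝ {v | ∃ k, ∃ X ∈ S E k, X p₀ = v} = (⊤ : Submodule ℝ (V n))) :
    ¬ ∃ D : (V n → V n) → (V n → V n) → (V n → V n),
        IsAffineConnection D ∧
        (∀ X Y : V n → V n, ContDiff ℝ (⊤ : ℕ∞) X → ContDiff ℝ (⊤ : ℕ∞) Y →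
          D X Y - D Y X = bracket X Y) ∧
        (∀ X Y : V n → V n, ContDiff ℝ (⊤ : ℕ∞) X → Y ∈ S E 0 → ∀ p, D X Y p ∈ E p) := by
  rintro ⟨D, _hD, htf, hcomp⟩
  have key : ∀ k, S E k ⊆ S E 0 := by
    intro k
    induction k with
    | zero => exact fun _ h => h
    | succ k ih =>
      intro Z hZ
      rw [S] at hZ
      rcases hZ with hZ | ⟨X, hX, Y, hY, rfl⟩
      · exact ih hZ
      · have hY0 := ih hY
        simp only [S, Set.mem_setOf_eq] at hX hY0 ⊢
        have hXs : ContDiff ℝ (⊤ : ℕ∞) X := hX.1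
        have hYs : ContDiff ℝ (⊤ : ℕ∞) Y := hY0.1
        constructor
        · apply ContDiff.sub
          · exact (hYs.fderiv_right le_rfl).clm_apply hXs
          · exact (hXs.fderiv_right le_rfl).clm_apply hYs
        · intro p
          have := congrFun (htf X Y hXs hYs) p
          simp only [Pi.sub_apply] at this
          rw [← this]
          exact Submodule.sub_mem _ (hcomp X Y hXs (by simpa [S] using hY0) p) (hcomp Y X hYs (by simpa [S] using hX) p)
  apply hproper
  rw [← hbg]
  congr 1
  ext v
  constructor
  · rintro ⟨X, hX, rfl⟩; exact ⟨0, X, hX, rfl⟩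
  · rintro ⟨k, X, hX, rfl⟩; exact ⟨X, key k hX, rfl⟩

end Stmt4
end

section
/- On ℝ³, let X(x, y, z) = (1, 0, −y/2) and Y(x, y, z) = (0, 1, x/2). Then for every pair of points p, q ∈ ℝ³ there exists a continuous, piecewise continuously differentiable curve γ : [0, 1] → ℝ³ with γ(0) = p, γ(1) = q, and γ′(t) ∈ span{X(γ(t)), Y(γ(t))} at every t where γ is differentiable. That is, the bracket-generating distribution E = span{X, Y} on ℝ³ satisfies the conclusion of the Chow–Rashevskiĭ theorem: any two points are connected by a horizontal curve. -/
namespace Stmt18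

/-- `X(x, y, z) = (1, 0, −y/2)`. -/
noncomputable def X (p : ℝ × ℝ × ℝ) : ℝ × ℝ × ℝ := (1, 0, -p.2.1 / 2)

/-- `Y(x, y, z) = (0, 1, x/2)`. -/
noncomputable def Y (p : ℝ × ℝ × ℝ) : ℝ × ℝ × ℝ := (0, 1, p.1 / 2)

/-- Derivative of a degree-5 polynomial. -/
lemma hasDerivAt_poly (c0 c1 c2 c3 c4 c5 t : ℝ) :
    HasDerivAt (fun x : ℝ => c0 + c1*x + c2*x^2 + c3*x^3 + c4*x^4 + c5*x^5)
      (c1 + 2*c2*t + 3*c3*t^2 + 4*c4*t^3 + 5*c5*t^4) t := by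
  have h : HasDerivAt (fun x : ℝ => c0 + c1*x + c2*x^2 + c3*x^3 + c4*x^4 + c5*x^5)
      ((((((0 : ℝ) + c1 * 1) + c2 * ((2:ℕ) * t ^ (2-1))) + c3 * ((3:ℕ) * t ^ (3-1)))
        + c4 * ((4:ℕ) * t ^ (4-1))) + c5 * ((5:ℕ) * t ^ (5-1))) t :=
    (((((hasDerivAt_const t c0).add ((hasDerivAt_id t).const_mul c1)).add
      ((hasDerivAt_pow 2 t).const_mul c2)).add ((hasDerivAt_pow 3 t).const_mul c3)).add
      ((hasDerivAt_pow 4 t).const_mul c4)).add ((hasDerivAt_pow 5 t).const_mul c5)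
  convert h using 1
  push_cast
  ring

/-- Main construction: an explicit polynomial horizontal curve from
`(p1,p2,p3)` to `(p1+B, p2+E, p3+dz)`, assuming the parameters `σ, a` satisfy
the quadratic relation that makes the vertical displacement come out right. -/
lemma key (p1 p2 p3 B E dz σ a : ℝ) (hσ : σ^2 = 1)
    (ha : a^2 = 5*σ*E*a - 15*σ*(2*dz - E*p1 + B*p2)) :
    ∃ (γ : ℝ → ℝ × ℝ × ℝ) (s : Finset ℝ),
      ContinuousOn γ (Set.Icc 0 1) ∧ γ 0 = (p1, p2, p3) ∧ γ 1 = (p1+B, p2+E, p3+dz) ∧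
      ∀ t ∈ Set.Icc (0 : ℝ) 1, t ∉ s →
        ∃ a' b' : ℝ,
          HasDerivWithinAt γ (a' • X (γ t) + b' • Y (γ t)) (Set.Icc 0 1) t := by
  refine ⟨fun t => (p1 + (B+a)*t + (-a)*t^2 + 0*t^3 + 0*t^4 + 0*t^5,
      p2 + (E+a*σ)*t + (-3*a*σ)*t^2 + (2*a*σ)*t^3 + 0*t^4 + 0*t^5,
      p3 + ((p1*E + p1*a*σ - B*p2 - p2*a)/2)*t + ((-3*p1*a*σ + p2*a)/2)*t^2
        + (p1*a*σ - B*a*σ/2 + E*a/6 - a^2*σ/3)*t^3 + ((B*a*σ + a^2*σ)/2)*t^4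
        + (-(a^2*σ)/5)*t^5), ∅, ?_, ?_, ?_, ?_⟩
  · exact Continuous.continuousOn (by fun_prop)
  · norm_num
  · simp only [Prod.mk.injEq]
    refine ⟨by ring, by ring, ?_⟩
    linear_combination (-(σ)/30)*ha + ((5*E*a - 15*(2*dz - E*p1 + B*p2))/30 + (-p1*E - E*a/3 + B*p2 + 2*dz))*hσ
  · intro t ht hts
    refine ⟨(B+a) + 2*(-a)*t, (E+a*σ) + 2*(-3*a*σ)*t + 3*(2*a*σ)*t^2, ?_⟩
    have hx := hasDerivAt_poly p1 (B+a) (-a) 0 0 0 t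
    have hy := hasDerivAt_poly p2 (E+a*σ) (-3*a*σ) (2*a*σ) 0 0 t
    have hz := hasDerivAt_poly p3 ((p1*E + p1*a*σ - B*p2 - p2*a)/2) ((-3*p1*a*σ + p2*a)/2)
      (p1*a*σ - B*a*σ/2 + E*a/6 - a^2*σ/3) ((B*a*σ + a^2*σ)/2) (-(a^2*σ)/5) t
    have h := (hx.prodMk (hy.prodMk hz)).hasDerivWithinAt (s := Set.Icc 0 1)
    refine h.congr_deriv ?_
    simp only [X, Y, Prod.smul_mk, smul_eq_mul, Prod.mk_add_mk, Prod.mk.injEq]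
    refine ⟨by ring, by ring, by ring⟩

/-- Chow–Rashevskiĭ connectivity for the Heisenberg distribution
`E = span{X, Y}` on `ℝ³`: any two points `p, q` are joined by a continuous,
piecewise continuously differentiable horizontal curve `γ : [0,1] → ℝ³`, i.e. a
continuous curve, differentiable outside finitely many times, whose derivative lies
in `span{X(γ(t)), Y(γ(t))}` wherever it exists. -/
theorem heisenberg_chow_rashevskii (p q : ℝ × ℝ × ℝ) :
    ∃ (γ : ℝ → ℝ × ℝ × ℝ) (s : Finset ℝ),
      ContinuousOn γ (Set.Icc 0 1) ∧ γ 0 = p ∧ γ 1 = q ∧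
      ∀ t ∈ Set.Icc (0 : ℝ) 1, t ∉ s →
        ∃ a b : ℝ,
          HasDerivWithinAt γ (a • X (γ t) + b • Y (γ t)) (Set.Icc 0 1) t := by
  obtain ⟨p1, p2, p3⟩ := p
  obtain ⟨q1, q2, q3⟩ := q
  set B := q1 - p1 with hB
  set E := q2 - p2 with hE
  set dz := q3 - p3 with hdz
  set M := 2*dz - E*p1 + B*p2 with hM
  set σ : ℝ := if M ≤ 0 then 1 else -1 with hσdef
  have hσ : σ^2 = 1 := by
    rcases le_or_gt M 0 with h | h
    · rw [hσdef, if_pos h]; norm_num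
    · rw [hσdef, if_neg (not_le.mpr h)]; norm_num
  have hσM : σ * M ≤ 0 := by
    rcases le_or_gt M 0 with h | h
    · rw [hσdef, if_pos h]; linarith
    · rw [hσdef, if_neg (not_le.mpr h)]; linarith
  have hDnn : (0:ℝ) ≤ 25*E^2 - 60*σ*M := by nlinarith [sq_nonneg E]
  set r := Real.sqrt (25*E^2 - 60*σ*M) with hr
  have hr2 : r^2 = 25*E^2 - 60*σ*M := Real.sq_sqrt hDnn
  set a := (5*σ*E + r)/2 with haDef
  have ha : a^2 = 5*σ*E*a - 15*σ*M := by
    rw [haDef]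
    linear_combination hr2/4 - (25*E^2/4)*hσ
  have := key p1 p2 p3 B E dz σ a hσ (by rw [← hM]; exact ha)
  rw [show ((p1+B, p2+E, p3+dz) : ℝ × ℝ × ℝ) = (q1, q2, q3) from by
    simp [hB, hE, hdz]] at this
  exact this
end Stmt18
end
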